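/- arXiv:2008.09868 — 3 statements merged into one kernel-verified Lean document; each statement's English description precedes it below -/
import Mathlib

section
/- Let a ∈ [0,1), let σ ≥ μ > 0, let κ > 0, let γ ∈ ℝ, and let A₁, A₂, A₃ > 0. Suppose I : [0,∞) → [0,∞) is measurable, satisfies I(τ) ≤ A₁ e^{−γτ} for all τ ≥ 0, and satisfies the integral inequality I(τ) ≤ A₂ e^{−μτ} + A₃ ∫₀^τ (e^{−σ(τ−s)} / min(1, τ−s)^a) e^{−κs} I(s) ds for all τ ≥ 0. Then there exists a constant C > 0, depending only on a, σ, μ, κ, γ, A₁, A₂, A₃, such that I(τ) ≤ C e^{−μτ} for all τ ≥ 0. -/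
open MeasureTheory

section GronwallAux

open Set Real

private lemma gronwall_kernel_bound {a c τ : ℝ} (ha1 : a < 1) (hc : 0 < c) (hτ : 0 ≤ τ) :
    IntegrableOn (fun s => Real.exp (-c * s) * (min 1 (τ - s)) ^ (-a)) (Ioo 0 τ) ∧
    ∫ s in Ioo 0 τ, Real.exp (-c * s) * (min 1 (τ - s)) ^ (-a) ≤ 1 / c + 1 / (1 - a) := by
  set t₀ := max 0 (τ - 1) with ht₀def
  have ht₀0 : 0 ≤ t₀ := le_max_left _ _
  have ht₀τ : t₀ ≤ τ := max_le hτ (by linarith)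
  have hτt₀ : τ - t₀ ≤ 1 := by
    rw [ht₀def]; rcases le_total 0 (τ - 1) with h | h
    · rw [max_eq_right h]; linarith
    · rw [max_eq_left h]; linarith
  set H : ℝ → ℝ := fun s =>
    Real.exp (-c * s) + Set.indicator (Ioi t₀) (fun s => (τ - s) ^ (-a)) s with hHdef
  have h1int : IntegrableOn (fun s => Real.exp (-c * s)) (Ioo 0 τ) :=
    (exp_neg_integrableOn_Ioi 0 hc).mono_set Ioo_subset_Ioi_self
  have hsetinter : Ioo (0:ℝ) τ ∩ Ioi t₀ = Ioo t₀ τ := by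
    ext s; simp only [mem_inter_iff, mem_Ioo, mem_Ioi]
    constructor
    · rintro ⟨⟨_, h2⟩, h3⟩; exact ⟨h3, h2⟩
    · rintro ⟨h1, h2⟩; exact ⟨⟨lt_of_le_of_lt ht₀0 h1, h2⟩, h1⟩
  have hrpowII : IntervalIntegrable (fun s => (τ - s) ^ (-a)) volume t₀ τ := by
    have := (intervalIntegral.intervalIntegrable_rpow' (a := 0) (b := τ - t₀)
      (by linarith : (-1:ℝ) < -a)).comp_sub_left τ
    simpa using this.symm
  have h2int : IntegrableOn (fun s => (τ - s) ^ (-a)) (Ioo t₀ τ) :=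
    ((intervalIntegrable_iff_integrableOn_Ioc_of_le ht₀τ).mp hrpowII).mono_set Ioo_subset_Ioc_self
  have hindint : IntegrableOn (Set.indicator (Ioi t₀) (fun s => (τ - s) ^ (-a))) (Ioo 0 τ) := by
    rw [IntegrableOn, integrable_indicator_iff measurableSet_Ioi, IntegrableOn,
      Measure.restrict_restrict measurableSet_Ioi]
    rw [Set.inter_comm, hsetinter]
    exact h2int
  have hHint : IntegrableOn H (Ioo 0 τ) := h1int.add hindint
  have hbound : ∀ s ∈ Ioo (0:ℝ) τ,
      Real.exp (-c * s) * (min 1 (τ - s)) ^ (-a) ≤ H s := by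
    intro s hs
    obtain ⟨hs0, hsτ⟩ := hs
    rcases le_or_gt s t₀ with h | h
    · have hτs : 1 ≤ τ - s := by
        rcases le_total (τ - 1) 0 with hτ1 | hτ1
        · rw [ht₀def, max_eq_left hτ1] at h; linarith
        · rw [ht₀def, max_eq_right hτ1] at h; linarith
      have : min 1 (τ - s) = 1 := min_eq_left hτs
      rw [this, Real.one_rpow, mul_one, hHdef]
      have : Set.indicator (Ioi t₀) (fun s => (τ - s) ^ (-a)) s = 0 :=
        Set.indicator_of_notMem (by simpa using h) _
      simp [this]
    · have hτs1 : τ - s ≤ 1 := by linarith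
      have hτs0 : 0 < τ - s := by linarith
      have hmin : min 1 (τ - s) = τ - s := min_eq_right hτs1
      rw [hmin, hHdef]
      have hind : Set.indicator (Ioi t₀) (fun s => (τ - s) ^ (-a)) s = (τ - s) ^ (-a) :=
        Set.indicator_of_mem (by simpa using h) _
      simp only [hind]
      have h1 : Real.exp (-c * s) ≤ 1 := by
        rw [Real.exp_le_one_iff]; nlinarith
      have h2 : (0:ℝ) ≤ (τ - s) ^ (-a) := Real.rpow_nonneg hτs0.le _
      nlinarith [Real.exp_pos (-c * s)]
  have hmeas : Measurable fun s => Real.exp (-c * s) * (min 1 (τ - s)) ^ (-a) := by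
    apply Measurable.mul
    · exact ((measurable_id.const_mul (-c)).exp)
    · exact (measurable_const.min (measurable_const.sub measurable_id)).pow measurable_const
  have hnonneg : ∀ s ∈ Ioo (0:ℝ) τ,
      0 ≤ Real.exp (-c * s) * (min 1 (τ - s)) ^ (-a) := by
    intro s hs
    have : (0:ℝ) < min 1 (τ - s) := lt_min one_pos (by linarith [hs.1, hs.2])
    positivity
  have hint : IntegrableOn (fun s => Real.exp (-c * s) * (min 1 (τ - s)) ^ (-a)) (Ioo 0 τ) := by
    apply hHint.mono' hmeas.aestronglyMeasurable.restrict
    rw [ae_restrict_iff' measurableSet_Ioo]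
    filter_upwards with s hs
    rw [Real.norm_eq_abs, abs_of_nonneg (hnonneg s hs)]
    exact hbound s hs
  refine ⟨hint, ?_⟩
  have step1 : ∫ s in Ioo 0 τ, Real.exp (-c * s) * (min 1 (τ - s)) ^ (-a) ≤ ∫ s in Ioo 0 τ, H s := by
    apply integral_mono_of_nonneg
    · exact (ae_restrict_iff' measurableSet_Ioo).mpr (Filter.Eventually.of_forall hnonneg)
    · exact hHint
    · exact (ae_restrict_iff' measurableSet_Ioo).mpr (Filter.Eventually.of_forall hbound)
  have hHsplit : ∫ s in Ioo 0 τ, H s = (∫ s in Ioo 0 τ, Real.exp (-c * s)) +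
      ∫ s in Ioo t₀ τ, (τ - s) ^ (-a) := by
    rw [hHdef, integral_add h1int hindint]
    congr 1
    rw [integral_indicator measurableSet_Ioi, Measure.restrict_restrict measurableSet_Ioi,
      Set.inter_comm, hsetinter]
  have hexp_le : ∫ s in Ioo 0 τ, Real.exp (-c * s) ≤ 1 / c := by
    have hmono : ∫ s in Ioo 0 τ, Real.exp (-c * s) ≤ ∫ s in Ioi 0, Real.exp (-c * s) := by
      apply setIntegral_mono_set (exp_neg_integrableOn_Ioi 0 hc)
      · filter_upwards with s using (Real.exp_pos _).le
      · exact HasSubset.Subset.eventuallyLE Ioo_subset_Ioi_self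
    have hval : ∫ s in Ioi (0:ℝ), Real.exp (-c * s) = 1 / c := by
      have := integral_comp_mul_left_Ioi (fun y => Real.exp (-y)) 0 hc
      simp only [mul_zero, neg_mul, smul_eq_mul] at this ⊢
      rw [this, integral_exp_neg_Ioi]
      simp [one_div]
    linarith [hmono, hval.le]
  have hrpow_le : ∫ s in Ioo t₀ τ, (τ - s) ^ (-a) ≤ 1 / (1 - a) := by
    have e1 : ∫ s in Ioo t₀ τ, (τ - s) ^ (-a) = ∫ s in t₀..τ, (τ - s) ^ (-a) := by
      rw [intervalIntegral.integral_of_le ht₀τ, integral_Ioc_eq_integral_Ioo]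
    have e2 : ∫ s in t₀..τ, (τ - s) ^ (-a) = ∫ u in (0:ℝ)..(τ - t₀), u ^ (-a) := by
      have := intervalIntegral.integral_comp_sub_left (a := t₀) (b := τ)
        (fun u => u ^ (-a)) τ
      simpa using this
    have e3 : ∫ u in (0:ℝ)..(τ - t₀), u ^ (-a) = ((τ - t₀) ^ (-a + 1) - 0 ^ (-a + 1)) / (-a + 1) :=
      integral_rpow (Or.inl (by linarith))
    rw [e1, e2, e3, Real.zero_rpow (by linarith : (-a + 1) ≠ 0)]
    have h1 : (τ - t₀) ^ (-a + 1) ≤ 1 :=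
      Real.rpow_le_one (by linarith) hτt₀ (by linarith)
    rw [sub_zero]
    rw [div_le_div_iff₀ (by linarith) (by linarith)]
    nlinarith
  calc ∫ s in Ioo 0 τ, Real.exp (-c * s) * (min 1 (τ - s)) ^ (-a) ≤ ∫ s in Ioo 0 τ, H s := step1
    _ = _ + _ := hHsplit
    _ ≤ 1 / c + 1 / (1 - a) := by gcongr

private lemma gronwall_step {a σ μ κ A₂ A₃ : ℝ}
    (ha1 : a < 1) (hμσ : μ ≤ σ) (hκ : 0 < κ) (hA₂ : 0 < A₂) (hA₃ : 0 < A₃)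
    {I : ℝ → ℝ}
    (hInonneg : ∀ τ : ℝ, 0 ≤ τ → 0 ≤ I τ)
    (hIint : ∀ τ : ℝ, 0 ≤ τ →
      I τ ≤ A₂ * Real.exp (-μ * τ) +
        A₃ * ∫ s in Set.Ioo (0 : ℝ) τ,
          Real.exp (-σ * (τ - s)) / (min 1 (τ - s)) ^ a * (Real.exp (-κ * s) * I s))
    {B β : ℝ} (hB : 0 < B) (hβ : β ≤ μ)
    (h : ∀ τ : ℝ, 0 ≤ τ → I τ ≤ B * Real.exp (-β * τ)) :
    ∀ τ : ℝ, 0 ≤ τ → I τ ≤ (A₂ + A₃ * B * (1 / (κ / 2) + 1 / (1 - a))) *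
      Real.exp (-(min μ (β + κ / 2)) * τ) := by
  intro τ hτ
  set ρ := min μ (β + κ / 2) with hρdef
  have hρμ : ρ ≤ μ := min_le_left _ _
  have hρβ : ρ ≤ β + κ / 2 := min_le_right _ _
  have hρσ : ρ ≤ σ := le_trans hρμ hμσ
  set M := 1 / (κ / 2) + 1 / (1 - a) with hMdef
  have hc : 0 < κ / 2 := by linarith
  have h1a : (0:ℝ) < 1 - a := by linarith
  have hM0 : 0 < M := by
    rw [hMdef]
    have := one_div_pos.mpr hc
    have := one_div_pos.mpr h1a
    linarith
  obtain ⟨hKint, hKle⟩ := gronwall_kernel_bound (c := κ / 2) ha1 hc hτ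
  have key : (∫ s in Set.Ioo (0:ℝ) τ,
      Real.exp (-σ * (τ - s)) / (min 1 (τ - s)) ^ a * (Real.exp (-κ * s) * I s))
      ≤ B * Real.exp (-ρ * τ) * M := by
    have hg : IntegrableOn (fun s => (B * Real.exp (-ρ * τ)) *
        (Real.exp (-(κ / 2) * s) * (min 1 (τ - s)) ^ (-a))) (Set.Ioo 0 τ) :=
      hKint.const_mul _
    have hnn : ∀ s ∈ Set.Ioo (0:ℝ) τ,
        0 ≤ Real.exp (-σ * (τ - s)) / (min 1 (τ - s)) ^ a * (Real.exp (-κ * s) * I s) := by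
      intro s hs
      have hmin : (0:ℝ) < min 1 (τ - s) := lt_min one_pos (by linarith [hs.1, hs.2])
      have hIs := hInonneg s hs.1.le
      positivity
    have hle : ∀ s ∈ Set.Ioo (0:ℝ) τ,
        Real.exp (-σ * (τ - s)) / (min 1 (τ - s)) ^ a * (Real.exp (-κ * s) * I s)
        ≤ (B * Real.exp (-ρ * τ)) * (Real.exp (-(κ / 2) * s) * (min 1 (τ - s)) ^ (-a)) := by
      intro s hs
      obtain ⟨hs0, hsτ⟩ := hs
      have hmin : (0:ℝ) < min 1 (τ - s) := lt_min one_pos (by linarith)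
      have hm : (0:ℝ) ≤ (min 1 (τ - s)) ^ (-a) := Real.rpow_nonneg hmin.le _
      have hI : I s ≤ B * Real.exp (-β * s) := h s hs0.le
      have hdiv : Real.exp (-σ * (τ - s)) / (min 1 (τ - s)) ^ a
          = Real.exp (-σ * (τ - s)) * (min 1 (τ - s)) ^ (-a) := by
        rw [Real.rpow_neg hmin.le, div_eq_mul_inv]
      rw [hdiv]
      have hexp : Real.exp (-σ * (τ - s)) * (Real.exp (-κ * s) * Real.exp (-β * s))
          ≤ Real.exp (-ρ * τ) * Real.exp (-(κ / 2) * s) := by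
        rw [← Real.exp_add, ← Real.exp_add, ← Real.exp_add, Real.exp_le_exp]
        nlinarith [mul_nonneg (sub_nonneg.mpr hρσ) (sub_nonneg.mpr hsτ.le),
          mul_nonneg (sub_nonneg.mpr hρβ) hs0.le]
      calc Real.exp (-σ * (τ - s)) * (min 1 (τ - s)) ^ (-a) * (Real.exp (-κ * s) * I s)
          ≤ Real.exp (-σ * (τ - s)) * (min 1 (τ - s)) ^ (-a) *
            (Real.exp (-κ * s) * (B * Real.exp (-β * s))) := by
            apply mul_le_mul_of_nonneg_left
            · exact mul_le_mul_of_nonneg_left hI (Real.exp_pos _).le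
            · exact mul_nonneg (Real.exp_pos _).le hm
        _ = (Real.exp (-σ * (τ - s)) * (Real.exp (-κ * s) * Real.exp (-β * s))) *
            (B * (min 1 (τ - s)) ^ (-a)) := by ring
        _ ≤ (Real.exp (-ρ * τ) * Real.exp (-(κ / 2) * s)) *
            (B * (min 1 (τ - s)) ^ (-a)) := by
            exact mul_le_mul_of_nonneg_right hexp (mul_nonneg hB.le hm)
        _ = (B * Real.exp (-ρ * τ)) * (Real.exp (-(κ / 2) * s) * (min 1 (τ - s)) ^ (-a)) := by
            ring
    have hmono := integral_mono_of_nonneg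
      ((ae_restrict_iff' measurableSet_Ioo).mpr (Filter.Eventually.of_forall hnn)) hg
      ((ae_restrict_iff' measurableSet_Ioo).mpr (Filter.Eventually.of_forall hle))
    rw [integral_const_mul] at hmono
    calc (∫ s in Set.Ioo (0:ℝ) τ,
        Real.exp (-σ * (τ - s)) / (min 1 (τ - s)) ^ a * (Real.exp (-κ * s) * I s))
        ≤ (B * Real.exp (-ρ * τ)) *
          ∫ s in Set.Ioo (0:ℝ) τ, Real.exp (-(κ / 2) * s) * (min 1 (τ - s)) ^ (-a) := hmono
      _ ≤ B * Real.exp (-ρ * τ) * M := by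
          apply mul_le_mul_of_nonneg_left hKle
          positivity
  have hexpτ : Real.exp (-μ * τ) ≤ Real.exp (-ρ * τ) := by
    rw [Real.exp_le_exp]
    nlinarith
  calc I τ ≤ A₂ * Real.exp (-μ * τ) +
        A₃ * ∫ s in Set.Ioo (0 : ℝ) τ,
          Real.exp (-σ * (τ - s)) / (min 1 (τ - s)) ^ a * (Real.exp (-κ * s) * I s) :=
      hIint τ hτ
    _ ≤ A₂ * Real.exp (-ρ * τ) + A₃ * (B * Real.exp (-ρ * τ) * M) := by
        gcongr
    _ = (A₂ + A₃ * B * M) * Real.exp (-ρ * τ) := by ring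

end GronwallAux

/-- **Modified Gronwall inequality** (Lemma 2.5 of the paper).
If a nonnegative measurable function `I` on `[0,∞)` satisfies
`I τ ≤ A₁ e^{-γτ}` and the integral inequality
`I τ ≤ A₂ e^{-μτ} + A₃ ∫₀^τ e^{-σ(τ-s)} / min(1, τ-s)^a · e^{-κ s} I s ds`,
then `I τ ≤ C e^{-μτ}` for a constant `C` depending only on the data. -/
theorem statement0 (a σ μ κ γ A₁ A₂ A₃ : ℝ)
    (ha0 : 0 ≤ a) (ha1 : a < 1) (hμσ : μ ≤ σ) (hμ : 0 < μ) (hκ : 0 < κ)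
    (hA₁ : 0 < A₁) (hA₂ : 0 < A₂) (hA₃ : 0 < A₃)
    (I : ℝ → ℝ) (hImeas : Measurable I)
    (hInonneg : ∀ τ : ℝ, 0 ≤ τ → 0 ≤ I τ)
    (hIexp : ∀ τ : ℝ, 0 ≤ τ → I τ ≤ A₁ * Real.exp (-γ * τ))
    (hIint : ∀ τ : ℝ, 0 ≤ τ →
      I τ ≤ A₂ * Real.exp (-μ * τ) +
        A₃ * ∫ s in Set.Ioo (0 : ℝ) τ,
          Real.exp (-σ * (τ - s)) / (min 1 (τ - s)) ^ a * (Real.exp (-κ * s) * I s)) :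
    ∃ C : ℝ, 0 < C ∧ ∀ τ : ℝ, 0 ≤ τ → I τ ≤ C * Real.exp (-μ * τ) := by
  set β₀ := min γ μ with hβ₀def
  have claim : ∀ n : ℕ, ∃ B : ℝ, 0 < B ∧ ∀ τ : ℝ, 0 ≤ τ →
      I τ ≤ B * Real.exp (-(min μ (β₀ + n * (κ / 2))) * τ) := by
    intro n
    induction n with
    | zero =>
      refine ⟨A₁, hA₁, fun τ hτ => ?_⟩
      have hm : min μ (β₀ + (0:ℕ) * (κ / 2)) = β₀ := by
        push_cast
        rw [zero_mul, add_zero, hβ₀def, min_comm γ μ, ← min_assoc, min_self]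
      rw [hm]
      calc I τ ≤ A₁ * Real.exp (-γ * τ) := hIexp τ hτ
        _ ≤ A₁ * Real.exp (-β₀ * τ) := by
            apply mul_le_mul_of_nonneg_left _ hA₁.le
            rw [Real.exp_le_exp]
            have : β₀ ≤ γ := min_le_left _ _
            nlinarith
    | succ n ih =>
      obtain ⟨B, hB, hIB⟩ := ih
      have hβn : min μ (β₀ + n * (κ / 2)) ≤ μ := min_le_left _ _
      have hstep := gronwall_step ha1 hμσ hκ hA₂ hA₃ hInonneg hIint hB hβn hIB
      have hc : (0:ℝ) < κ / 2 := by linarith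
      have h1a : (0:ℝ) < 1 - a := by linarith
      have hMpos : (0:ℝ) < 1 / (κ / 2) + 1 / (1 - a) :=
        add_pos (one_div_pos.mpr hc) (one_div_pos.mpr h1a)
      refine ⟨A₂ + A₃ * B * (1 / (κ / 2) + 1 / (1 - a)),
        add_pos hA₂ (mul_pos (mul_pos hA₃ hB) hMpos), fun τ hτ => ?_⟩
      have hm : min μ (min μ (β₀ + n * (κ / 2)) + κ / 2)
          = min μ (β₀ + (n + 1 : ℕ) * (κ / 2)) := by
        push_cast
        simp only [min_def]
        split_ifs <;> linarith
      have := hstep τ hτ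
      rwa [hm] at this
  obtain ⟨n, hn⟩ := exists_nat_ge ((μ - β₀) / (κ / 2))
  have hc : 0 < κ / 2 := by linarith
  have hnμ : μ ≤ β₀ + n * (κ / 2) := by
    rw [div_le_iff₀ hc] at hn
    linarith
  obtain ⟨B, hB, hIB⟩ := claim n
  refine ⟨B, hB, fun τ hτ => ?_⟩
  have := hIB τ hτ
  rwa [min_eq_left hnμ] at this
end

section
/- Let α ∈ (1,2) and let G : ℝ² → ℂ be the inverse Fourier transform of ξ ↦ e^{−‖ξ‖^α}. Define Λ^α G as the inverse Fourier transform of the integrable function ξ ↦ ‖ξ‖^α e^{−‖ξ‖^α}. Then G is continuously differentiable and for every η ∈ ℝ², −(Λ^α G)(η) + (1/α) η · ∇G(η) + (1 − 1/α) G(η) = (1 − 3/α) G(η). In other words, G is an eigenfunction of the operator 𝓛 = −Λ^α + (1/α) η·∇ + (1 − 1/α) with eigenvalue 1 − 3/α. -/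
/-!
Write `G_t = 𝓕⁻ (e^{-t‖·‖^α})` on a `d`-dimensional space, so that `G = G_1`. The dilation
`ξ ↦ t^{1/α} ξ` turns `e^{-t‖ξ‖^α}` into `e^{-‖ξ‖^α}`, whence `G_t(η) = t^{-d/α} G(t^{-1/α} η)`.
Differentiating in `t` at `t = 1`, under the integral on the left and by the chain rule on the
right, gives `-Λ^α G(η) = -(d/α) G(η) - (1/α) η · ∇G(η)`; for `d = 2`, adding `(1 - 1/α) G`
yields the eigenvalue `1 - 3/α`. The moments `‖ξ‖^s e^{-‖ξ‖^α}` are integrable by polar coordinates, which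
also makes `G` smooth.
-/

open MeasureTheory Real
open scoped FourierTransform ENNReal

noncomputable section

/-- The profile `G`: the inverse Fourier transform of `ξ ↦ e^{-‖ξ‖^α}` on `ℝ²`. -/
def Gprof (α : ℝ) : EuclideanSpace ℝ (Fin 2) → ℂ :=
  𝓕⁻ (fun ξ : EuclideanSpace ℝ (Fin 2) => (Real.exp (-‖ξ‖ ^ α) : ℂ))

/-- `Λ^α G`: the inverse Fourier transform of `ξ ↦ ‖ξ‖^α e^{-‖ξ‖^α}` on `ℝ²`. -/
def LambdaG (α : ℝ) : EuclideanSpace ℝ (Fin 2) → ℂ :=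
  𝓕⁻ (fun ξ : EuclideanSpace ℝ (Fin 2) => ((‖ξ‖ ^ α : ℝ) : ℂ) * (Real.exp (-‖ξ‖ ^ α) : ℂ))

open Filter Module
open scoped Topology RealInnerProductSpace

theorem integrable_norm_rpow_mul_exp_neg_mul_norm_rpow {E : Type*} [NormedAddCommGroup E]
    [NormedSpace ℝ E] [Nontrivial E] [FiniteDimensional ℝ E] [MeasurableSpace E] [BorelSpace E]
    (μ : Measure E) [μ.IsAddHaarMeasure] {s p b : ℝ}
    (hs : -(finrank ℝ E : ℝ) < s) (hp : 0 < p) (hb : 0 < b) :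
    Integrable (fun x : E => ‖x‖ ^ s * exp (-b * ‖x‖ ^ p)) μ := by
  refine (integrable_fun_norm_addHaar μ (f := fun y => y ^ s * exp (-b * y ^ p))).2 ?_
  have hd : 1 ≤ finrank ℝ E := finrank_pos
  refine (integrableOn_rpow_mul_exp_neg_mul_rpow (s := s + (finrank ℝ E - 1 : ℕ)) ?_ hp hb
    ).congr_fun (fun y hy => ?_) measurableSet_Ioi
  · push_cast [hd]
    linarith
  · simp only [smul_eq_mul]
    rw [rpow_add hy, rpow_natCast]
    ring

theorem hasDerivAt_one_rpow_smul_comp_rpow_smul {E F : Type*} [NormedAddCommGroup E]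
    [NormedSpace ℝ E] [NormedAddCommGroup F] [NormedSpace ℂ F] {f : E → F} {η : E}
    (hf : DifferentiableAt ℝ f η) (a b : ℝ) :
    HasDerivAt (fun t : ℝ => ((t ^ a : ℝ) : ℂ) • f (t ^ b • η))
      ((a : ℂ) • f η + (b : ℂ) • fderiv ℝ f η η) 1 := by
  have ha : HasDerivAt (fun t : ℝ => ((t ^ a : ℝ) : ℂ)) a 1 := by
    simpa using (hasDerivAt_rpow_const (x := 1) (p := a) (Or.inl one_ne_zero)).ofReal_comp
  have hb : HasDerivAt (fun t : ℝ => t ^ b • η) (b • η) 1 := by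
    simpa using (hasDerivAt_rpow_const (x := 1) (p := b) (Or.inl one_ne_zero)).smul_const η
  have hfb : HasDerivAt (fun t : ℝ => f (t ^ b • η)) (fderiv ℝ f η (b • η)) 1 :=
    hf.hasFDerivAt.comp_hasDerivAt_of_eq 1 hb (by rw [one_rpow, one_smul])
  refine (ha.smul hfb).congr_deriv ?_
  rw [one_rpow, one_rpow, one_smul, Complex.ofReal_one, one_smul, add_comm, map_smul]
  simp only [Complex.coe_smul]

section Fourier

variable {V : Type*} [NormedAddCommGroup V] [InnerProductSpace ℝ V] [FiniteDimensional ℝ V]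
  [MeasurableSpace V] [BorelSpace V]

theorem fourierInv_comp_smul {F : Type*} [NormedAddCommGroup F] [NormedSpace ℂ F] (f : V → F)
    {c : ℝ} (hc : 0 < c) (w : V) :
    𝓕⁻ (fun ξ => f (c • ξ)) w = (c ^ finrank ℝ V)⁻¹ • 𝓕⁻ f (c⁻¹ • w) := by
  simp only [fourierInv_eq]
  rw [← Measure.integral_comp_smul_of_nonneg volume _ c (hR := hc.le)]
  simp only [real_inner_smul_left, real_inner_smul_right, inv_mul_cancel_left₀ hc.ne']

theorem fourierInv_exp_neg_mul_norm_rpow {α t : ℝ} (hα : 0 < α) (ht : 0 < t) (η : V) :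
    𝓕⁻ (fun ξ : V => (exp (-(t * ‖ξ‖ ^ α)) : ℂ)) η =
      ((t ^ (-(finrank ℝ V / α)) : ℝ) : ℂ) *
        𝓕⁻ (fun ξ : V => (exp (-‖ξ‖ ^ α) : ℂ)) (t ^ (-(1 / α)) • η) := by
  set c := t ^ (1 / α)
  have hc : 0 < c := rpow_pos_of_pos ht _
  have hnorm : ∀ ξ : V, ‖c • ξ‖ ^ α = t * ‖ξ‖ ^ α := fun ξ => by
    rw [norm_smul, norm_of_nonneg hc.le, mul_rpow hc.le (norm_nonneg _), ← rpow_mul ht.le,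
      one_div_mul_cancel hα.ne', rpow_one]
  have hpow : (c ^ finrank ℝ V)⁻¹ = t ^ (-(finrank ℝ V / α)) := by
    rw [← rpow_natCast, ← rpow_mul ht.le, ← rpow_neg ht.le]
    ring_nf
  have hinv : c⁻¹ = t ^ (-(1 / α)) := (rpow_neg ht.le _).symm
  simp only [← hnorm]
  rw [fourierInv_comp_smul (fun ξ : V => (exp (-‖ξ‖ ^ α) : ℂ)) hc, hpow, hinv, Complex.real_smul]

theorem hasDerivAt_fourierInv_exp_neg_mul {φ : V → ℝ} (hφ : Measurable φ) (hφ0 : ∀ ξ, 0 ≤ φ ξ)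
    {t₀ : ℝ} (ht₀ : 0 < t₀) (h_int : Integrable fun ξ => exp (-(t₀ * φ ξ)))
    (h_dom : Integrable fun ξ => φ ξ * exp (-(t₀ / 2 * φ ξ))) (η : V) :
    HasDerivAt (fun t => 𝓕⁻ (fun ξ => (exp (-(t * φ ξ)) : ℂ)) η)
      (-𝓕⁻ (fun ξ => (φ ξ : ℂ) * (exp (-(t₀ * φ ξ)) : ℂ)) η) t₀ := by
  simp only [fourierInv_eq, ← integral_neg, ← smul_neg]
  have h_bound : ∀ᵐ ξ : V, ∀ t ∈ Metric.ball t₀ (t₀ / 2),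
      ‖𝐞 ⟪ξ, η⟫ • (-((φ ξ : ℂ) * (exp (-(t * φ ξ)) : ℂ)))‖ ≤ φ ξ * exp (-(t₀ / 2 * φ ξ)) := by
    refine .of_forall fun ξ t ht => ?_
    have ht' : t₀ / 2 ≤ t := by
      rw [Metric.mem_ball, Real.dist_eq, abs_sub_lt_iff] at ht
      linarith
    rw [Circle.norm_smul, norm_neg, norm_mul, Complex.norm_real, Complex.norm_real,
      norm_of_nonneg (hφ0 ξ), norm_of_nonneg (exp_nonneg _)]
    gcongr
    all_goals exact hφ0 ξ
  have h_diff : ∀ᵐ ξ : V, ∀ t ∈ Metric.ball t₀ (t₀ / 2),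
      HasDerivAt (fun u => 𝐞 ⟪ξ, η⟫ • (exp (-(u * φ ξ)) : ℂ))
        (𝐞 ⟪ξ, η⟫ • (-((φ ξ : ℂ) * (exp (-(t * φ ξ)) : ℂ)))) t := by
    refine .of_forall fun ξ t _ => ?_
    have h₁ : HasDerivAt (fun u => -(u * φ ξ)) (-φ ξ) t := (hasDerivAt_mul_const _).neg
    have h : HasDerivAt (fun u => ((exp (-(u * φ ξ)) : ℝ) : ℂ))
        (-((φ ξ : ℂ) * (exp (-(t * φ ξ)) : ℂ))) t := by
      convert h₁.exp.ofReal_comp using 1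
      push_cast
      ring
    exact h.const_smul (𝐞 ⟪ξ, η⟫)
  refine (hasDerivAt_integral_of_dominated_loc_of_deriv_le (Metric.ball_mem_nhds _ (by linarith))
    (.of_forall fun t => ?_) ?_ ?_ h_bound h_dom h_diff).2
  · fun_prop
  · refine h_int.mono' (by fun_prop) (.of_forall fun ξ => ?_)
    rw [Circle.norm_smul, Complex.norm_real, norm_of_nonneg (exp_nonneg _)]
  · fun_prop

variable [Nontrivial V]

theorem contDiff_fourierInv_exp_neg_norm_rpow {α : ℝ} (hα : 0 < α) :
    ContDiff ℝ (⊤ : ℕ∞) (𝓕⁻ fun ξ : V => (exp (-‖ξ‖ ^ α) : ℂ)) := by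
  rw [fourierInv_eq_fourier_comp_neg]
  refine Real.contDiff_fourier fun n _ => ?_
  have hd : (0 : ℝ) < finrank ℝ V := Nat.cast_pos.2 finrank_pos
  simpa [Complex.norm_exp, rpow_natCast] using
    integrable_norm_rpow_mul_exp_neg_mul_norm_rpow (volume : Measure V) (s := n)
      (by linarith [(Nat.cast_nonneg n : (0 : ℝ) ≤ n)]) hα one_pos

theorem fourierInv_norm_rpow_mul_exp_neg_norm_rpow {α : ℝ} (hα : 0 < α) (η : V) :
    𝓕⁻ (fun ξ : V => ((‖ξ‖ ^ α : ℝ) : ℂ) * (exp (-‖ξ‖ ^ α) : ℂ)) η =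
      ((finrank ℝ V / α : ℝ) : ℂ) * 𝓕⁻ (fun ξ : V => (exp (-‖ξ‖ ^ α) : ℂ)) η +
        ((1 / α : ℝ) : ℂ) * fderiv ℝ (𝓕⁻ fun ξ : V => (exp (-‖ξ‖ ^ α) : ℂ)) η η := by
  have hd : (0 : ℝ) < finrank ℝ V := Nat.cast_pos.2 finrank_pos
  have h_int : Integrable fun ξ : V => exp (-(1 * ‖ξ‖ ^ α)) := by
    simpa using integrable_norm_rpow_mul_exp_neg_mul_norm_rpow (volume : Measure V) (s := 0)
      (by linarith) hα one_pos
  have h_dom : Integrable fun ξ : V => ‖ξ‖ ^ α * exp (-(1 / 2 * ‖ξ‖ ^ α)) := by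
    simpa using integrable_norm_rpow_mul_exp_neg_mul_norm_rpow (volume : Measure V) (s := α)
      (by linarith) hα (by norm_num : (0 : ℝ) < 1 / 2)
  have h_semigroup := hasDerivAt_fourierInv_exp_neg_mul (by fun_prop) (fun ξ => by positivity)
    one_pos h_int h_dom η
  have h_dilation := hasDerivAt_one_rpow_smul_comp_rpow_smul
    ((contDiff_fourierInv_exp_neg_norm_rpow hα).differentiable (by simp) η)
    (-(finrank ℝ V / α)) (-(1 / α))
  have h_eq : (fun t => 𝓕⁻ (fun ξ : V => (exp (-(t * ‖ξ‖ ^ α)) : ℂ)) η) =ᶠ[𝓝 1]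
      fun t => ((t ^ (-(finrank ℝ V / α)) : ℝ) : ℂ) •
        𝓕⁻ (fun ξ : V => (exp (-‖ξ‖ ^ α) : ℂ)) (t ^ (-(1 / α)) • η) := by
    filter_upwards [Ioi_mem_nhds one_pos] with t ht
    exact fourierInv_exp_neg_mul_norm_rpow hα ht η
  have h := h_semigroup.unique (h_dilation.congr_of_eventuallyEq h_eq)
  simp only [one_mul, smul_eq_mul] at h
  push_cast at h ⊢
  linear_combination -h

end Fourier

theorem statement3_general (α : ℝ) (hα1 : 1 < α) :
    ContDiff ℝ 1 (Gprof α) ∧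
    ∀ η : EuclideanSpace ℝ (Fin 2),
      -(LambdaG α η) + ((1 / α : ℝ) : ℂ) * fderiv ℝ (Gprof α) η η
          + ((1 - 1 / α : ℝ) : ℂ) * Gprof α η
        = ((1 - 3 / α : ℝ) : ℂ) * Gprof α η := by
  have hα : 0 < α := by linarith
  refine ⟨(contDiff_fourierInv_exp_neg_norm_rpow hα).of_le (by simp), fun η => ?_⟩
  have h := fourierInv_norm_rpow_mul_exp_neg_norm_rpow hα η
  rw [finrank_euclideanSpace_fin] at h
  rw [LambdaG, Gprof, h]
  push_cast
  ring

/-- Proposition 4.1(1) of the paper: `G` is a `C¹` eigenfunction of the operator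
`𝓛 = -Λ^α + (1/α) η·∇ + (1 - 1/α)` with eigenvalue `1 - 3/α`. -/
theorem statement3 (α : ℝ) (hα1 : 1 < α) (hα2 : α < 2) :
    ContDiff ℝ 1 (Gprof α) ∧
    ∀ η : EuclideanSpace ℝ (Fin 2),
      -(LambdaG α η) + ((1 / α : ℝ) : ℂ) * fderiv ℝ (Gprof α) η η
          + ((1 - 1 / α : ℝ) : ℂ) * Gprof α η
        = ((1 - 3 / α : ℝ) : ℂ) * Gprof α η :=
  statement3_general α hα1
end
end

section
/- Let α ∈ (1,2). For τ > 0, set a(τ) = 1 − e^{−τ}, let G : ℝ² → ℂ be the inverse Fourier transform of ξ ↦ e^{−‖ξ‖^α}, and define (S_τ f)(η) = e^{(1−1/α)τ} a(τ)^{−2/α} ∫_{ℝ²} G((η − p)/a(τ)^{1/α}) f(e^{τ/α} p) dp. Then for every Schwartz function f on ℝ², every τ > 0, and j ∈ {1,2}, the function S_τ f is continuously differentiable and S_τ(∂_j f) = e^{−τ/α} ∂_j (S_τ f) pointwise on ℝ². In semigroup notation: e^{τ𝓛} ∇ = e^{−τ/α} ∇ e^{τ𝓛}. -/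
/-!
Substituting `p = η - u` writes `S_τ f` as `c · (g ⋆ ψ)`, where `g = G(a(τ)^{-1/α} ·)` is continuous
and bounded (`G` is the inverse Fourier transform of an integrable function) and
`ψ = f(e^{τ/α} ·)` is again a Schwartz function. Peetre's inequality
`1 + ‖y‖ ≤ (1 + ‖x‖)(1 + ‖x - y‖)` bounds all translates `ψ(x - ·)`, `x` near `x₀`, by one
integrable function, so `g ⋆ ψ` can be differentiated under the integral: `D(g ⋆ ψ) = g ⋆ Dψ`.
The chain rule `Dψ(x) = e^{τ/α} Df(e^{τ/α} x)` then gives `∂_j S_τ f = e^{τ/α} S_τ(∂_j f)`.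
-/

open MeasureTheory Real
open scoped FourierTransform ENNReal SchwartzMap

noncomputable section

/-- The semigroup `e^{τ𝓛}` in convolution form:
`(S_τ f)(η) = e^{(1-1/α)τ} a(τ)^{-2/α} ∫ G((η-p)/a(τ)^{1/α}) f(e^{τ/α} p) dp`,
with `a(τ) = 1 - e^{-τ}`. -/
def Sop (α τ : ℝ) (f : EuclideanSpace ℝ (Fin 2) → ℂ) :
    EuclideanSpace ℝ (Fin 2) → ℂ := fun η =>
  (Real.exp ((1 - 1 / α) * τ) * (1 - Real.exp (-τ)) ^ (-(2 / α)) : ℝ) •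
    ∫ p : EuclideanSpace ℝ (Fin 2),
      Gprof α ((((1 - Real.exp (-τ)) ^ (1 / α) : ℝ)⁻¹) • (η - p)) * f (Real.exp (τ / α) • p)

theorem one_add_norm_le_mul_one_add_norm_sub {E : Type*} [SeminormedAddCommGroup E] (x y : E) :
    1 + ‖y‖ ≤ (1 + ‖x‖) * (1 + ‖x - y‖) := by
  have : ‖y‖ ≤ ‖x‖ + ‖x - y‖ := by simpa using norm_sub_le x (x - y)
  nlinarith [norm_nonneg x, norm_nonneg (x - y)]

theorem le_mul_one_add_norm_rpow_neg {E : Type*} [SeminormedAddCommGroup E] {x : E} {a D : ℝ}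
    (k : ℕ) (h : (1 + ‖x‖) ^ k * a ≤ D) : a ≤ D * (1 + ‖x‖) ^ (-(k : ℝ)) := by
  have hx : 0 < (1 + ‖x‖) ^ k := by positivity
  rw [rpow_neg (by positivity), rpow_natCast, ← div_eq_mul_inv, le_div_iff₀ hx, mul_comm]
  exact h

theorem SchwartzMap.exists_norm_sub_le_of_mem_ball {E W : Type*} [NormedAddCommGroup E]
    [NormedSpace ℝ E] [NormedAddCommGroup W] [NormedSpace ℝ W]
    (ψ : 𝓢(E, W)) (k : ℕ) (x₀ : E) :
    ∃ D, ∀ x ∈ Metric.ball x₀ 1, ∀ y, ‖ψ (x - y)‖ ≤ D * (1 + ‖y‖) ^ (-(k : ℝ)) := by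
  set M := 2 ^ k * (Finset.Iic (k, 0)).sup (fun m => SchwartzMap.seminorm ℝ m.1 m.2) ψ
  refine ⟨(2 + ‖x₀‖) ^ k * M, fun x hx y => le_mul_one_add_norm_rpow_neg k ?_⟩
  have hdecay : (1 + ‖x - y‖) ^ k * ‖ψ (x - y)‖ ≤ M := by
    simpa using ψ.one_add_le_sup_seminorm_apply (𝕜 := ℝ) (m := (k, 0)) le_rfl le_rfl (x - y)
  have hx : 1 + ‖x‖ ≤ 2 + ‖x₀‖ := by
    have := norm_le_norm_add_norm_sub' x x₀
    rw [Metric.mem_ball, dist_eq_norm] at hx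
    linarith
  calc (1 + ‖y‖) ^ k * ‖ψ (x - y)‖
      ≤ ((1 + ‖x‖) * (1 + ‖x - y‖)) ^ k * ‖ψ (x - y)‖ := by
        gcongr
        exact one_add_norm_le_mul_one_add_norm_sub x y
    _ = (1 + ‖x‖) ^ k * ((1 + ‖x - y‖) ^ k * ‖ψ (x - y)‖) := by rw [mul_pow]; ring
    _ ≤ (2 + ‖x₀‖) ^ k * M := by gcongr

section ConvolutionWithSchwartz

variable {E W : Type*} [NormedAddCommGroup E] [NormedSpace ℝ E] [NormedAddCommGroup W]
  [NormedSpace ℂ W] [MeasurableSpace E] {μ : Measure E} {g : E → ℂ} {C : ℝ}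

theorem exists_integrable_bound_smul_schwartz_sub [μ.HasTemperateGrowth] (hgC : ∀ y, ‖g y‖ ≤ C)
    (ψ : 𝓢(E, W)) (x₀ : E) : ∃ b : E → ℝ, Integrable b μ ∧
      ∀ x ∈ Metric.ball x₀ 1, ∀ y, ‖g y • ψ (x - y)‖ ≤ b y := by
  obtain ⟨D, hD⟩ := ψ.exists_norm_sub_le_of_mem_ball μ.integrablePower x₀
  refine ⟨fun y => C * (D * (1 + ‖y‖) ^ (-(μ.integrablePower : ℝ))),
    ((Measure.integrable_pow_neg_integrablePower μ).const_mul D).const_mul C, fun x hx y => ?_⟩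
  rw [norm_smul]
  exact mul_le_mul (hgC y) (hD x hx y) (norm_nonneg _) ((norm_nonneg _).trans (hgC y))

variable [BorelSpace E] [SecondCountableTopology E]

theorem aestronglyMeasurable_smul_schwartz_sub (hg : Continuous g) (ψ : 𝓢(E, W)) (x : E) :
    AEStronglyMeasurable (fun y => g y • ψ (x - y)) μ :=
  (hg.smul (ψ.continuous.comp (continuous_sub_left x))).aestronglyMeasurable

variable [μ.HasTemperateGrowth]

theorem integrable_smul_schwartz_sub (hg : Continuous g) (hgC : ∀ y, ‖g y‖ ≤ C)
    (ψ : 𝓢(E, W)) (x : E) : Integrable (fun y => g y • ψ (x - y)) μ := by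
  obtain ⟨b, hb, hbound⟩ := exists_integrable_bound_smul_schwartz_sub (μ := μ) hgC ψ x
  exact hb.mono' (aestronglyMeasurable_smul_schwartz_sub hg ψ x)
    (.of_forall (hbound x (Metric.mem_ball_self one_pos)))

theorem continuous_integral_smul_schwartz_sub (hg : Continuous g) (hgC : ∀ y, ‖g y‖ ≤ C)
    (ψ : 𝓢(E, W)) : Continuous fun x => ∫ y, g y • ψ (x - y) ∂μ := by
  refine continuous_iff_continuousAt.2 fun x₀ => ?_
  obtain ⟨b, hb, hbound⟩ := exists_integrable_bound_smul_schwartz_sub (μ := μ) hgC ψ x₀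
  refine continuousAt_of_dominated (.of_forall (aestronglyMeasurable_smul_schwartz_sub hg ψ))
    (Filter.eventually_of_mem (Metric.ball_mem_nhds x₀ one_pos) fun x hx =>
      .of_forall (hbound x hx))
    hb (.of_forall fun y => ?_)
  exact (continuous_const.smul (ψ.continuous.comp (continuous_sub_right y))).continuousAt

theorem hasFDerivAt_integral_smul_schwartz_sub (hg : Continuous g) (hgC : ∀ y, ‖g y‖ ≤ C)
    (ψ : 𝓢(E, W)) (x₀ : E) :
    HasFDerivAt (fun x => ∫ y, g y • ψ (x - y) ∂μ)
      (∫ y, g y • fderiv ℝ ψ (x₀ - y) ∂μ) x₀ := by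
  obtain ⟨b, hb, hbound⟩ :=
    exists_integrable_bound_smul_schwartz_sub (μ := μ) hgC (SchwartzMap.fderivCLM ℝ E W ψ) x₀
  refine hasFDerivAt_integral_of_dominated_of_fderiv_le (Metric.ball_mem_nhds x₀ one_pos)
    (.of_forall (aestronglyMeasurable_smul_schwartz_sub hg ψ))
    (integrable_smul_schwartz_sub hg hgC ψ x₀)
    (aestronglyMeasurable_smul_schwartz_sub hg (SchwartzMap.fderivCLM ℝ E W ψ) x₀)
    (.of_forall fun y x hx => hbound x hx y) hb (.of_forall fun y x _ => ?_)
  exact ((ψ.differentiableAt.hasFDerivAt).comp x ((hasFDerivAt_id x).sub_const y)).const_smul (g y)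

theorem contDiff_one_integral_smul_schwartz_sub (hg : Continuous g) (hgC : ∀ y, ‖g y‖ ≤ C)
    (ψ : 𝓢(E, W)) : ContDiff ℝ 1 fun x => ∫ y, g y • ψ (x - y) ∂μ := by
  rw [contDiff_one_iff_fderiv]
  refine ⟨fun x => (hasFDerivAt_integral_smul_schwartz_sub hg hgC ψ x).differentiableAt, ?_⟩
  have hfderiv : fderiv ℝ (fun x => ∫ y, g y • ψ (x - y) ∂μ) =
      fun x => ∫ y, g y • SchwartzMap.fderivCLM ℝ E W ψ (x - y) ∂μ :=
    funext fun x => (hasFDerivAt_integral_smul_schwartz_sub hg hgC ψ x).fderiv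
  rw [hfderiv]
  exact continuous_integral_smul_schwartz_sub hg hgC (SchwartzMap.fderivCLM ℝ E W ψ)

end ConvolutionWithSchwartz

section FourierInv

variable {V F : Type*} [NormedAddCommGroup V] [InnerProductSpace ℝ V] [MeasurableSpace V]
  [BorelSpace V] [FiniteDimensional ℝ V] [NormedAddCommGroup F] [NormedSpace ℂ F]

theorem Real.continuous_fourierInv_of_integrable {f : V → F} (hf : Integrable f) :
    Continuous (𝓕⁻ f) :=
  VectorFourier.fourierIntegral_continuous Real.continuous_fourierChar continuous_inner.neg hf

theorem Real.norm_fourierInv_le_integral_norm (f : V → F) (w : V) :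
    ‖𝓕⁻ f w‖ ≤ ∫ v, ‖f v‖ :=
  VectorFourier.norm_fourierIntegral_le_integral_norm _ _ _ _ _

end FourierInv

theorem integrable_exp_neg_norm_rpow {E : Type*} [NormedAddCommGroup E] [NormedSpace ℝ E]
    [FiniteDimensional ℝ E] [MeasurableSpace E] [BorelSpace E] [Nontrivial E] (μ : Measure E)
    [μ.IsAddHaarMeasure] {p : ℝ} (hp : 0 < p) :
    Integrable (fun x : E => exp (-‖x‖ ^ p)) μ := by
  rw [integrable_fun_norm_addHaar μ (f := fun y => exp (-y ^ p))]
  have hs : (-1 : ℝ) < (Module.finrank ℝ E - 1 : ℕ) := by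
    linarith [Nat.cast_nonneg (α := ℝ) (Module.finrank ℝ E - 1)]
  refine (integrableOn_rpow_mul_exp_neg_rpow hs hp).congr_fun (fun y _ => ?_) measurableSet_Ioi
  simp only [rpow_natCast, smul_eq_mul]

theorem continuous_Gprof {α : ℝ} (hα : 0 < α) : Continuous (Gprof α) :=
  Real.continuous_fourierInv_of_integrable (integrable_exp_neg_norm_rpow volume hα).ofReal

theorem norm_Gprof_le (α : ℝ) (x : EuclideanSpace ℝ (Fin 2)) :
    ‖Gprof α x‖ ≤ ∫ ξ : EuclideanSpace ℝ (Fin 2), ‖(Real.exp (-‖ξ‖ ^ α) : ℂ)‖ :=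
  Real.norm_fourierInv_le_integral_norm _ x

theorem Sop_eq_smul_integral (α τ : ℝ) (φ : EuclideanSpace ℝ (Fin 2) → ℂ) :
    Sop α τ φ = fun η =>
      (Real.exp ((1 - 1 / α) * τ) * (1 - Real.exp (-τ)) ^ (-(2 / α)) : ℝ) •
        ∫ u, Gprof α ((((1 - Real.exp (-τ)) ^ (1 / α) : ℝ)⁻¹) • u) •
          φ (Real.exp (τ / α) • (η - u)) := by
  funext η
  rw [Sop, ← integral_sub_left_eq_self _ volume η]
  simp only [sub_sub_cancel, smul_eq_mul]

theorem statement7_general (α τ : ℝ) (hα1 : 1 < α)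
    (f : SchwartzMap (EuclideanSpace ℝ (Fin 2)) ℂ) (j : Fin 2) :
    ContDiff ℝ 1 (Sop α τ ⇑f) ∧
    ∀ η : EuclideanSpace ℝ (Fin 2),
      Sop α τ (fun x => fderiv ℝ (⇑f) x (EuclideanSpace.single j 1)) η
        = ((Real.exp (-(τ / α)) : ℝ) : ℂ)
            * fderiv ℝ (Sop α τ ⇑f) η (EuclideanSpace.single j 1) := by
  set e := Real.exp (τ / α)
  set c := Real.exp ((1 - 1 / α) * τ) * (1 - Real.exp (-τ)) ^ (-(2 / α))
  set g := fun u : EuclideanSpace ℝ (Fin 2) => Gprof α (((1 - Real.exp (-τ)) ^ (1 / α))⁻¹ • u)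
  have hg : Continuous g :=
    (continuous_Gprof (zero_lt_one.trans hα1)).comp (continuous_const_smul _)
  have hgC (u) : ‖g u‖ ≤ _ := norm_Gprof_le α _
  let ψ : 𝓢(EuclideanSpace ℝ (Fin 2), ℂ) := SchwartzMap.compCLMOfContinuousLinearEquiv ℝ
    (ContinuousLinearEquiv.smulLeft (Units.mk0 e (exp_pos _).ne')) f
  have hSf : Sop α τ f = fun η => c • ∫ u, g u • ψ (η - u) := Sop_eq_smul_integral α τ f
  refine ⟨hSf ▸ (contDiff_one_integral_smul_schwartz_sub hg hgC ψ).const_smul c, fun η => ?_⟩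
  have hDψ (x) : fderiv ℝ ψ x = e • fderiv ℝ f (e • x) := by
    rw [show (ψ : _ → ℂ) = fun x => f (e • x) from rfl]
    exact fderiv_comp_smul e
  have hDS : HasFDerivAt (fun η => c • ∫ u, g u • ψ (η - u))
      (c • ∫ u, g u • fderiv ℝ ψ (η - u)) η :=
    (hasFDerivAt_integral_smul_schwartz_sub hg hgC ψ η).const_smul c
  have hint : Integrable fun u => g u • fderiv ℝ ψ (η - u) :=
    integrable_smul_schwartz_sub hg hgC (SchwartzMap.fderivCLM ℝ _ _ ψ) η
  rw [hSf, hDS.fderiv, smul_apply, ContinuousLinearMap.integral_apply hint, Sop_eq_smul_integral]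
  simp only [smul_apply, hDψ, smul_comm (g _) e, integral_smul]
  have he : Real.exp (-(τ / α)) * e = 1 := by rw [← Real.exp_add]; simp
  rw [← Complex.real_smul, smul_comm c e, smul_smul, he, one_smul]

/-- The commutation formula (4.6) of the paper: `e^{τ𝓛} ∂_j f = e^{-τ/α} ∂_j (e^{τ𝓛} f)` for
Schwartz `f`, and `S_τ f` is continuously differentiable. -/
theorem statement7 (α τ : ℝ) (hα1 : 1 < α) (hα2 : α < 2) (hτ : 0 < τ)
    (f : SchwartzMap (EuclideanSpace ℝ (Fin 2)) ℂ) (j : Fin 2) :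
    ContDiff ℝ 1 (Sop α τ ⇑f) ∧
    ∀ η : EuclideanSpace ℝ (Fin 2),
      Sop α τ (fun x => fderiv ℝ (⇑f) x (EuclideanSpace.single j 1)) η
        = ((Real.exp (-(τ / α)) : ℝ) : ℂ)
            * fderiv ℝ (Sop α τ ⇑f) η (EuclideanSpace.single j 1) :=
  statement7_general α τ hα1 f j
end
end
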